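/- arXiv:2202.05198 — 5 statements merged into one kernel-verified Lean document; each statement's English description precedes it below -/
import Mathlib

section
/- Let X ⊆ ℝⁿ be a convex compact set and let g₁,…,g_m : ℝⁿ → ℝ be convex functions with bounds b₁,…,b_m ∈ ℝ. Then the union over l of the sets {x ∈ X : g_l(x) ≤ b_l} equals the projection onto the x-coordinates of the set {(x, α¹,…,α^m) ∈ X × (ℝ^P)^m : for every l, and for each s ∈ {1,…,P}, Σ_{i ∈ I_s} h_{i,l}(x_i) ≤ α^l_s, and there exists l with Σ_{s=1}^P α^l_s ≤ b_l}, where g_l(x) = Σ_{i=1}^n h_{i,l}(x_i) and I₁,…,I_P is a partition of {1,…,n}. -/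
/-- Lemma 1: the P-split representation has the same feasible set in x-space
as the original disjunction. -/
theorem p_split_representation_feasible_set
    (n m P : ℕ)
    (X : Set (Fin n → ℝ)) (hXconv : Convex ℝ X) (hXcomp : IsCompact X)
    (h : Fin n → Fin m → ℝ → ℝ) (hconv : ∀ i l, ConvexOn ℝ Set.univ (h i l))
    (g : Fin m → (Fin n → ℝ) → ℝ)
    (hg : ∀ l x, g l x = ∑ i, h i l (x i))
    (b : Fin m → ℝ)
    (I : Fin P → Finset (Fin n))
    (hcover : (⋃ s, (I s : Set (Fin n))) = Set.univ)
    (hdisj : ∀ s t : Fin P, s ≠ t → Disjoint (I s) (I t)) :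
    (⋃ l, {x ∈ X | g l x ≤ b l}) =
      {x | ∃ α : Fin m → Fin P → ℝ,
        x ∈ X ∧
        (∀ l s, ∑ i ∈ I s, h i l (x i) ≤ α l s) ∧
        (∃ l, ∑ s, α l s ≤ b l)} := by
  have huniv : (Finset.univ : Finset (Fin n)) = Finset.univ.biUnion I := by
    apply Finset.ext
    intro i
    simp only [Finset.mem_univ, Finset.mem_biUnion, true_iff, true_and]
    have : i ∈ (⋃ s, (I s : Set (Fin n))) := by rw [hcover]; trivial
    simpa using this
  have hsum : ∀ (f : Fin n → ℝ), ∑ i, f i = ∑ s, ∑ i ∈ I s, f i := by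
    intro f
    rw [huniv, Finset.sum_biUnion]
    intro s _ t _ hst
    exact hdisj s t hst
  ext x
  simp only [Set.mem_iUnion, Set.mem_setOf_eq, Set.mem_sep_iff]
  constructor
  · rintro ⟨l, hxX, hxb⟩
    refine ⟨fun l' s => ∑ i ∈ I s, h i l' (x i), hxX, fun _ _ => le_refl _, l, ?_⟩
    rw [← hsum, ← hg]; exact hxb
  · rintro ⟨α, hxX, hα, l, hl⟩
    refine ⟨l, hxX, ?_⟩
    rw [hg, hsum]
    exact le_trans (Finset.sum_le_sum fun s _ => hα l s) hl
end

section
/- Consider a two-term disjunction with a single constraint per disjunct, g_l(x) ≤ b_l for l = 1,2, with g_l(x) = Σᵢ h_{i,l}(xᵢ) over a convex compact set X. Fix a partition I₁,…,I_P of the variable indices and valid bounds ᾱ^l_s ≥ max_{x∈X} Σ_{i∈I_s} h_{i,l}(xᵢ), α̲^l_s ≤ min_{x∈X} Σ_{i∈I_s} h_{i,l}(xᵢ). Then for any (x, λ₁, λ₂) with λ₁ + λ₂ = 1, λ ∈ {0,1}², x ∈ X: x satisfies the disjunct selected by λ if and only if for every subset S_p ⊆ {1,…,P}, Σ_{s ∈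 S_p} Σ_{i ∈ I_s} h_{i,1}(xᵢ) ≤ (b₁ − Σ_{s ∉ S_p} α̲¹_s)λ₁ + (Σ_{s ∈ S_p} ᾱ¹_s)λ₂, and symmetrically for disjunct 2 with λ₁ and λ₂ exchanged. -/
lemma sum_partition {n P : ℕ} (I : Fin P → Finset (Fin n))
    (hcover : ∀ i : Fin n, ∃ s, i ∈ I s)
    (hdisj : ∀ s t : Fin P, s ≠ t → Disjoint (I s) (I t))
    (f : Fin n → ℝ) : ∑ i, f i = ∑ s, ∑ i ∈ I s, f i := by
  rw [← Finset.sum_biUnion (fun s _ t _ hst => hdisj s t hst)]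
  congr 1
  ext i
  simp only [Finset.mem_biUnion, Finset.mem_univ, true_and]
  exact iff_of_true trivial (hcover i)

/-- Integer-feasibility correctness of the non-extended realization of the
P-split formulation for a two-term disjunction (Theorem 3, integer λ). -/
theorem p_split_nonextended_two_term_integer_correct
    (n P : ℕ)
    (X : Set (Fin n → ℝ)) (hXconv : Convex ℝ X) (hXcomp : IsCompact X)
    (h : Fin n → Fin 2 → ℝ → ℝ) (b : Fin 2 → ℝ)
    (I : Fin P → Finset (Fin n))
    (hcover : ∀ i : Fin n, ∃ s, i ∈ I s)
    (hdisj : ∀ s t : Fin P, s ≠ t → Disjoint (I s) (I t))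
    (ub lb : Fin 2 → Fin P → ℝ)
    (hub : ∀ l s, ∀ x ∈ X, ∑ i ∈ I s, h i l (x i) ≤ ub l s)
    (hlb : ∀ l s, ∀ x ∈ X, lb l s ≤ ∑ i ∈ I s, h i l (x i))
    (lam : Fin 2 → ℝ) (hbin : ∀ l, lam l = 0 ∨ lam l = 1)
    (hsum : lam 0 + lam 1 = 1)
    (x : Fin n → ℝ) (hx : x ∈ X) :
    (∀ l, lam l = 1 → ∑ i, h i l (x i) ≤ b l) ↔
      (∀ Sp : Finset (Fin P),
        (∑ s ∈ Sp, ∑ i ∈ I s, h i 0 (x i) ≤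
          (b 0 - ∑ s ∈ Spᶜ, lb 0 s) * lam 0 + (∑ s ∈ Sp, ub 0 s) * lam 1) ∧
        (∑ s ∈ Sp, ∑ i ∈ I s, h i 1 (x i) ≤
          (b 1 - ∑ s ∈ Spᶜ, lb 1 s) * lam 1 + (∑ s ∈ Sp, ub 1 s) * lam 0)) := by
  have hpart : ∀ l : Fin 2, ∑ i, h i l (x i) = ∑ s, ∑ i ∈ I s, h i l (x i) :=
    fun l => sum_partition I hcover hdisj _
  have hsplit : ∀ l : Fin 2, ∀ Sp : Finset (Fin P),
      ∑ s ∈ Sp, ∑ i ∈ I s, h i l (x i) + ∑ s ∈ Spᶜ, ∑ i ∈ I s, h i l (x i)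
        = ∑ i, h i l (x i) := by
    intro l Sp
    rw [hpart l, Finset.sum_add_sum_compl]
  have hubS : ∀ l : Fin 2, ∀ Sp : Finset (Fin P),
      ∑ s ∈ Sp, ∑ i ∈ I s, h i l (x i) ≤ ∑ s ∈ Sp, ub l s :=
    fun l Sp => Finset.sum_le_sum fun s _ => hub l s x hx
  have hlbS : ∀ l : Fin 2, ∀ Sp : Finset (Fin P),
      ∑ s ∈ Spᶜ, lb l s ≤ ∑ s ∈ Spᶜ, ∑ i ∈ I s, h i l (x i) :=
    fun l Sp => Finset.sum_le_sum fun s _ => hlb l s x hx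
  constructor
  · intro hfeas Sp
    rcases hbin 0 with h0 | h0
    · have h1 : lam 1 = 1 := by linarith
      have hb := hfeas 1 h1
      constructor
      · rw [h0, h1]; simpa using hubS 0 Sp
      · rw [h0, h1]
        have := hsplit 1 Sp
        have := hlbS 1 Sp
        simp only [mul_one, mul_zero, add_zero]
        linarith
    · have h1 : lam 1 = 0 := by linarith
      have hb := hfeas 0 h0
      constructor
      · rw [h0, h1]
        have := hsplit 0 Sp
        have := hlbS 0 Sp
        simp only [mul_one, mul_zero, add_zero]
        linarith
      · rw [h0, h1]; simpa using hubS 1 Sp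
  · intro hS l hl
    have hkey := hS Finset.univ
    have hc : (Finset.univ : Finset (Fin P))ᶜ = ∅ := by simp
    rw [hc] at hkey
    simp only [Finset.sum_empty, sub_zero] at hkey
    fin_cases l
    · have hl0 : lam 0 = 1 := hl
      rcases hbin 1 with h1 | h1
      · have h2 := hkey.1
        rw [hl0, h1, mul_one, mul_zero, add_zero] at h2
        show ∑ i, h i 0 (x i) ≤ b 0
        rw [hpart 0]; exact h2
      · exfalso; linarith
    · have hl1 : lam 1 = 1 := hl
      rcases hbin 0 with h0 | h0
      · have h2 := hkey.2
        rw [hl1, h0, mul_one, mul_zero, add_zero] at h2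
        show ∑ i, h i 1 (x i) ≤ b 1
        rw [hpart 1]; exact h2
      · exfalso; linarith
end

section
/- Consider a two-term disjunction with one constraint per disjunct over a convex compact X, and the continuous relaxation (λ ∈ [0,1]²) of the big-M formulation: R_M = {x ∈ X : ∃ λ₁, λ₂ ≥ 0, λ₁ + λ₂ = 1, g_1(x) ≤ b_1 + M₁λ₂, g_2(x) ≤ b_2 + M₂λ₁} with M_l = sup_X g_l − b_l. Then the continuous relaxation of the 1-split formulation (P = 1, with α^l bounded by α̲^l = inf_X g_l and ᾱ^l = sup_X g_l), projected onto x, equals R_M. -/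
/-- Theorem 1: the continuous relaxation of the 1-split formulation,
projected onto the x-variables, equals the continuous relaxation of the
big-M formulation with the tightest big-M coefficients. -/
theorem one_split_relaxation_equals_bigM_relaxation
    (n : ℕ) (X : Set (Fin n → ℝ)) (hXconv : Convex ℝ X) (hXcomp : IsCompact X)
    (hXne : X.Nonempty)
    (g : Fin 2 → (Fin n → ℝ) → ℝ) (hgcont : ∀ l, ContinuousOn (g l) X)
    (b : Fin 2 → ℝ)
    (hfeas : ∀ l, ∃ x ∈ X, g l x ≤ b l)
    (lo hi M : Fin 2 → ℝ)
    (hlo : ∀ l, lo l = sInf (g l '' X))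
    (hhi : ∀ l, hi l = sSup (g l '' X))
    (hM : ∀ l, M l = hi l - b l) :
    {x ∈ X | ∃ α : Fin 2 → ℝ, ∃ ν : Fin 2 → Fin 2 → ℝ, ∃ lam : Fin 2 → ℝ,
        (∀ l, 0 ≤ lam l) ∧ lam 0 + lam 1 = 1 ∧
        (∀ l, α l = ν l 0 + ν l 1) ∧
        (∀ l, ν l l ≤ b l * lam l) ∧
        (∀ l d, lo l * lam d ≤ ν l d ∧ ν l d ≤ hi l * lam d) ∧
        (∀ l, g l x ≤ α l)} =
    {x ∈ X | ∃ lam : Fin 2 → ℝ,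
        (∀ l, 0 ≤ lam l) ∧ lam 0 + lam 1 = 1 ∧
        g 0 x ≤ b 0 + M 0 * lam 1 ∧
        g 1 x ≤ b 1 + M 1 * lam 0} := by
  have hKcomp : ∀ l, IsCompact (g l '' X) := fun l =>
    hXcomp.image_of_continuousOn (hgcont l)
  have hloleb : ∀ l, lo l ≤ b l := by
    intro l
    obtain ⟨x, hx, hgx⟩ := hfeas l
    have : sInf (g l '' X) ≤ g l x := csInf_le (hKcomp l).bddBelow ⟨x, hx, rfl⟩
    rw [hlo]; linarith
  have hlohi : ∀ l, ∀ x ∈ X, lo l ≤ g l x ∧ g l x ≤ hi l := by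
    intro l x hx
    constructor
    · rw [hlo]; exact csInf_le (hKcomp l).bddBelow ⟨x, hx, rfl⟩
    · rw [hhi]; exact le_csSup (hKcomp l).bddAbove ⟨x, hx, rfl⟩
  ext x
  simp only [Set.mem_setOf_eq]
  constructor
  · rintro ⟨hxX, α, ν, lam, hlam0, hlamsum, hα, hνb, hνbd, hg⟩
    refine ⟨hxX, lam, hlam0, hlamsum, ?_, ?_⟩
    · have h1 := hg 0
      have h2 := hα 0
      have h3 := hνb 0
      have h4 := (hνbd 0 1).2
      have hb : b 0 * lam 0 + b 0 * lam 1 = b 0 := by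
        rw [← mul_add, hlamsum, mul_one]
      have hM' : M 0 * lam 1 = hi 0 * lam 1 - b 0 * lam 1 := by rw [hM]; ring
      linarith
    · have h1 := hg 1
      have h2 := hα 1
      have h3 := hνb 1
      have h4 := (hνbd 1 0).2
      have hb : b 1 * lam 0 + b 1 * lam 1 = b 1 := by
        rw [← mul_add, hlamsum, mul_one]
      have hM' : M 1 * lam 0 = hi 1 * lam 0 - b 1 * lam 0 := by rw [hM]; ring
      linarith
  · rintro ⟨hxX, lam, hlam0, hlamsum, hg0, hg1⟩
    have hlohi0 := hlohi 0 x hxX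
    have hlohi1 := hlohi 1 x hxX
    have hlohi' : ∀ l : Fin 2, lo l ≤ hi l := fun l =>
      le_trans (hlohi l x hxX).1 (hlohi l x hxX).2
    set m : Fin 2 → ℝ := fun l => min (b l) (hi l) with hm
    have hlom : ∀ l, lo l ≤ m l := fun l => le_min (hloleb l) (hlohi' l)
    set ν : Fin 2 → Fin 2 → ℝ :=
      ![![m 0 * lam 0, max (g 0 x - m 0 * lam 0) (lo 0 * lam 1)],
        ![max (g 1 x - m 1 * lam 1) (lo 1 * lam 0), m 1 * lam 1]] with hν
    have hν00 : ν 0 0 = m 0 * lam 0 := rfl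
    have hν01 : ν 0 1 = max (g 0 x - m 0 * lam 0) (lo 0 * lam 1) := rfl
    have hν10 : ν 1 0 = max (g 1 x - m 1 * lam 1) (lo 1 * lam 0) := rfl
    have hν11 : ν 1 1 = m 1 * lam 1 := rfl
    have hmul : ∀ l d : Fin 2, lo l * lam d ≤ m l * lam d := fun l d =>
      mul_le_mul_of_nonneg_right (hlom l) (hlam0 d)
    have hmhi : ∀ l d : Fin 2, m l * lam d ≤ hi l * lam d := fun l d =>
      mul_le_mul_of_nonneg_right (min_le_right _ _) (hlam0 d)
    have hard : ∀ l d : Fin 2, g l x ≤ b l + M l * lam d → lam l + lam d = 1 →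
        g l x - m l * lam l ≤ hi l * lam d := by
      intro l d hgl hsum
      rcases min_cases (b l) (hi l) with ⟨he, hle⟩ | ⟨he, hle⟩ <;>
        simp only [hm, he]
      · have h1 : b l * lam l + b l * lam d = b l := by
          rw [← mul_add, hsum, mul_one]
        have h3 : M l * lam d = hi l * lam d - b l * lam d := by rw [hM]; ring
        linarith
      · have hgh := (hlohi l x hxX).2
        have h2 : hi l * lam l + hi l * lam d = hi l := by
          rw [← mul_add, hsum, mul_one]
        linarith
    refine ⟨hxX, fun l => ν l 0 + ν l 1, ν, lam, hlam0, hlamsum, fun l => rfl,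
      ?_, ?_, ?_⟩
    · rw [Fin.forall_fin_two]
      constructor
      · rw [hν00]; exact mul_le_mul_of_nonneg_right (min_le_left _ _) (hlam0 0)
      · rw [hν11]; exact mul_le_mul_of_nonneg_right (min_le_left _ _) (hlam0 1)
    · rw [Fin.forall_fin_two]
      constructor <;> rw [Fin.forall_fin_two]
      · refine ⟨⟨?_, ?_⟩, ⟨?_, ?_⟩⟩
        · rw [hν00]; exact hmul 0 0
        · rw [hν00]; exact hmhi 0 0
        · rw [hν01]; exact le_max_right _ _
        · rw [hν01]
          exact max_le (hard 0 1 hg0 hlamsum)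
            (mul_le_mul_of_nonneg_right (hlohi' 0) (hlam0 1))
      · refine ⟨⟨?_, ?_⟩, ⟨?_, ?_⟩⟩
        · rw [hν10]; exact le_max_right _ _
        · rw [hν10]
          exact max_le (hard 1 0 hg1 (by linarith))
            (mul_le_mul_of_nonneg_right (hlohi' 1) (hlam0 0))
        · rw [hν11]; exact hmul 1 1
        · rw [hν11]; exact hmhi 1 1
    · rw [Fin.forall_fin_two]
      constructor
      · show g 0 x ≤ ν 0 0 + ν 0 1
        rw [hν00, hν01]
        have := le_max_left (g 0 x - m 0 * lam 0) (lo 0 * lam 1)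
        linarith
      · show g 1 x ≤ ν 1 0 + ν 1 1
        rw [hν10, hν11]
        have := le_max_left (g 1 x - m 1 * lam 1) (lo 1 * lam 0)
        linarith
end

section
/- Let P ≥ 1 and consider the continuous relaxations R_P and R_{P+1} of the P-split and (P+1)-split formulations of the disjunction ∨_{l∈D} [g_l(x) ≤ b_l], where the (P+1)-split is obtained from the P-split by splitting partition set I₁ into disjoint nonempty sets I_a, I_b with I_a ∪ I_b = I₁, and where the bounds are additive: α̲^l_a + α̲^l_b = α̲^l_1 and ᾱ^l_a + ᾱ^l_b = ᾱ^l_1 for all l ∈ D. Then the projection of R_{P+1} onto the x-variables is contained in the projection of R_P onto the x-variables. -/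
open Finset

/-- The continuous relaxation of a split formulation of the disjunction
∨_{l} [Σ_i h_{i,l}(x_i) ≤ b_l], with split index type `S`, partition `I`,
and bounds `lo`, `hi` on the auxiliary variables, projected onto the
x-variables (the auxiliary variables α, ν, λ are existentially quantified). -/
def splitRelax {n m : ℕ} (S : Type*) [Fintype S]
    (X : Set (Fin n → ℝ)) (h : Fin n → Fin m → ℝ → ℝ) (b : Fin m → ℝ)
    (I : S → Finset (Fin n)) (lo hi : Fin m → S → ℝ) : Set (Fin n → ℝ) :=
  {x | x ∈ X ∧ ∃ α : Fin m → S → ℝ, ∃ ν : Fin m → S → Fin m → ℝ,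
    ∃ lam : Fin m → ℝ,
      (∀ l, 0 ≤ lam l) ∧ (∑ l, lam l) = 1 ∧
      (∀ l s, α l s = ∑ d, ν l s d) ∧
      (∀ l, (∑ s, ν l s l) ≤ b l * lam l) ∧
      (∀ l s d, lo l s * lam d ≤ ν l s d ∧ ν l s d ≤ hi l s * lam d) ∧
      (∀ l s, (∑ i ∈ I s, h i l (x i)) ≤ α l s)}

/-- Theorem 2: splitting one variable group of a P-split formulation into two
(with additive bounds) yields an as tight or tighter continuous relaxation:
the projection onto x of the (P+1)-split relaxation is contained in that of
the P-split relaxation. Here the small split is indexed by `Option T`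
(`none` being the group I₁ that gets split) and the large split by
`Bool ⊕ T` (`inl true`, `inl false` being the two halves I_a, I_b of I₁). -/
theorem p_plus_one_split_tighter
    (n m : ℕ) (T : Type*) [Fintype T] [DecidableEq T]
    (X : Set (Fin n → ℝ)) (hXconv : Convex ℝ X) (hXcomp : IsCompact X)
    (h : Fin n → Fin m → ℝ → ℝ) (b : Fin m → ℝ)
    (ISmall : Option T → Finset (Fin n)) (IBig : Bool ⊕ T → Finset (Fin n))
    (hrest : ∀ t : T, IBig (Sum.inr t) = ISmall (some t))
    (hsplit : IBig (Sum.inl true) ∪ IBig (Sum.inl false) = ISmall none)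
    (hdisjab : Disjoint (IBig (Sum.inl true)) (IBig (Sum.inl false)))
    (hnea : (IBig (Sum.inl true)).Nonempty)
    (hneb : (IBig (Sum.inl false)).Nonempty)
    (loS hiS : Fin m → Option T → ℝ) (loB hiB : Fin m → Bool ⊕ T → ℝ)
    (hloRest : ∀ l t, loB l (Sum.inr t) = loS l (some t))
    (hhiRest : ∀ l t, hiB l (Sum.inr t) = hiS l (some t))
    (hloAdd : ∀ l, loB l (Sum.inl true) + loB l (Sum.inl false) = loS l none)
    (hhiAdd : ∀ l, hiB l (Sum.inl true) + hiB l (Sum.inl false) = hiS l none) :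
    splitRelax (Bool ⊕ T) X h b IBig loB hiB ⊆
      splitRelax (Option T) X h b ISmall loS hiS := by

  rintro x ⟨hX, α, ν, lam, hlam0, hlam1, hαν, hb, hbnd, hsum⟩
  refine ⟨hX, (fun l s => Option.elim s (α l (Sum.inl true) + α l (Sum.inl false))
      (fun t => α l (Sum.inr t))),
    (fun l s d => Option.elim s (ν l (Sum.inl true) d + ν l (Sum.inl false) d)
      (fun t => ν l (Sum.inr t) d)),
    lam, hlam0, hlam1, ?_, ?_, ?_, ?_⟩
  · rintro l (_|t)
    · simp only [Option.elim]
      rw [hαν l (Sum.inl true), hαν l (Sum.inl false), ← Finset.sum_add_distrib]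
    · simpa using hαν l (Sum.inr t)
  · intro l
    have := hb l
    rw [Fintype.sum_sum_type, Fintype.sum_bool] at this
    rw [Fintype.sum_option]
    simpa [add_comm, add_assoc, add_left_comm] using this
  · rintro l (_|t) d
    · have h1 := hbnd l (Sum.inl true) d
      have h2 := hbnd l (Sum.inl false) d
      constructor
      · simpa [← hloAdd l, add_mul] using add_le_add h1.1 h2.1
      · simpa [← hhiAdd l, add_mul] using add_le_add h1.2 h2.2
    · simpa [hloRest, hhiRest] using hbnd l (Sum.inr t) d
  · rintro l (_|t)
    · have h1 := hsum l (Sum.inl true)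
      have h2 := hsum l (Sum.inl false)
      have : ∑ i ∈ ISmall none, h i l (x i)
          = ∑ i ∈ IBig (Sum.inl true), h i l (x i)
            + ∑ i ∈ IBig (Sum.inl false), h i l (x i) := by
        rw [← hsplit, Finset.sum_union hdisjab]
      simp only [Option.elim]
      rw [this]
      exact add_le_add h1 h2
    · simpa [hrest] using hsum l (Sum.inr t)
end

section
/- There exists a two-term disjunction with separable convex (in fact linear) constraints and independent bounds for which the continuous relaxation of the 2-split formulation, projected onto x-space, is a proper subset of the projection of the 1-split (big-M) relaxation. Concretely, for the disjunction [x₁+x₂+x₃+x₄ ≤ 1.5] ∨ [−x₁−2x₂−x₃−2x₄ ≤ −26] with xᵢ ∈ [0,5], the point obtained by setting λ₁ = λ₂ = 1/2 and choosing x so that the partial sums violate one split bound while the aggregated bound holds is feasible for the 1-split relaxation but infeasible for the 2-split relaxation with partition {1,2},{3,4}. -/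
open Finset

section Coarsening

variable {n m : ℕ} {S T : Type*} [Fintype S] [Fintype T] [DecidableEq T]
  {X : Set (Fin n → ℝ)} {h : Fin n → Fin m → ℝ → ℝ} {b : Fin m → ℝ}

theorem splitRelax_subset_of_coarsening (π : S → T) {I : S → Finset (Fin n)}
    {I' : T → Finset (Fin n)} {lo hi : Fin m → S → ℝ} {lo' hi' : Fin m → T → ℝ}
    (hdisj : (Set.univ : Set S).PairwiseDisjoint I)
    (hI : ∀ t, I' t = ({s | π s = t} : Finset S).biUnion I)
    (hlo : ∀ l t, lo' l t ≤ ∑ s with π s = t, lo l s)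
    (hhi : ∀ l t, ∑ s with π s = t, hi l s ≤ hi' l t) :
    splitRelax S X h b I lo hi ⊆ splitRelax T X h b I' lo' hi' := by
  rintro x ⟨hX, α, ν, lam, hlam0, hlam1, hαν, hb, hbnd, hcons⟩
  refine ⟨hX, fun l t => ∑ s with π s = t, α l s, fun l t d => ∑ s with π s = t, ν l s d,
    lam, hlam0, hlam1, fun l t => ?_, fun l => ?_, fun l t d => ⟨?_, ?_⟩, fun l t => ?_⟩
  · simp only [hαν]
    exact sum_comm
  · rw [sum_fiberwise]
    exact hb l
  · calc lo' l t * lam d ≤ (∑ s with π s = t, lo l s) * lam d :=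
          mul_le_mul_of_nonneg_right (hlo l t) (hlam0 d)
      _ = ∑ s with π s = t, lo l s * lam d := sum_mul ..
      _ ≤ _ := sum_le_sum fun s _ => (hbnd l s d).1
  · calc ∑ s with π s = t, ν l s d ≤ ∑ s with π s = t, hi l s * lam d :=
          sum_le_sum fun s _ => (hbnd l s d).2
      _ = (∑ s with π s = t, hi l s) * lam d := (sum_mul ..).symm
      _ ≤ hi' l t * lam d := mul_le_mul_of_nonneg_right (hhi l t) (hlam0 d)
  · rw [hI, sum_biUnion (hdisj.subset (Set.subset_univ _))]
    exact sum_le_sum fun s _ => hcons l s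

end Coarsening

section ProjectedInequalities

theorem sum_sub_le_sum_sub_of_le {ι : Type*} [Fintype ι] [DecidableEq ι] {f g : ι → ℝ}
    (hfg : ∀ i, f i ≤ g i) (a : ι) : ∑ i, f i - f a ≤ ∑ i, g i - g a := by
  rw [← sum_erase_eq_sub (mem_univ a), ← sum_erase_eq_sub (mem_univ a)]
  exact sum_le_sum fun i _ => hfg i

variable {n m : ℕ} {S : Type*} [Fintype S] [DecidableEq S]
  {X : Set (Fin n → ℝ)} {h : Fin n → Fin m → ℝ → ℝ} {b : Fin m → ℝ}
  {I : S → Finset (Fin n)} {lo hi : Fin m → S → ℝ}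

theorem exists_weights_of_mem_splitRelax {x : Fin n → ℝ}
    (hx : x ∈ splitRelax S X h b I lo hi) :
    ∃ lam : Fin m → ℝ, ∑ l, lam l = 1 ∧ ∀ l,
      (∀ s, ∑ i ∈ I s, h i l (x i) ≤
        (b l - ∑ s', lo l s' + lo l s) * lam l + hi l s * (1 - lam l)) ∧
      ∑ s, ∑ i ∈ I s, h i l (x i) ≤ b l * lam l + (∑ s, hi l s) * (1 - lam l) := by
  obtain ⟨-, α, ν, lam, -, hlam1, hαν, hb, hbnd, hcons⟩ := hx
  have hother : ∀ l s, ∑ d, ν l s d - ν l s l ≤ hi l s * (1 - lam l) := fun l s => by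
    simpa only [← mul_sum, hlam1, mul_sub] using
      sum_sub_le_sum_sub_of_le (fun d => (hbnd l s d).2) l
  refine ⟨lam, hlam1, fun l => ⟨fun s => ?_, ?_⟩⟩
  · have hown : (∑ s', lo l s' - lo l s) * lam l ≤ ∑ s', ν l s' l - ν l s l := by
      simpa only [← sum_mul, sub_mul] using
        sum_sub_le_sum_sub_of_le (fun s' => (hbnd l s' l).1) s
    linarith [hcons l s, hαν l s, hother l s, hb l]
  · calc ∑ s, ∑ i ∈ I s, h i l (x i) ≤ ∑ s, ∑ d, ν l s d :=
          sum_le_sum fun s _ => (hcons l s).trans_eq (hαν l s)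
      _ ≤ ∑ s, (ν l s l + hi l s * (1 - lam l)) :=
          sum_le_sum fun s _ => by linarith [hother l s]
      _ ≤ b l * lam l + (∑ s, hi l s) * (1 - lam l) := by
          rw [sum_add_distrib, ← sum_mul]
          linarith [hb l]

end ProjectedInequalities

/-- Corollary 1 (strictness): for the two-term disjunction
[x₁+x₂+x₃+x₄ ≤ 1.5] ∨ [−x₁−2x₂−x₃−2x₄ ≤ −26] over [0,5]⁴, the continuous
relaxation of the 2-split formulation with partition {1,2},{3,4} (and the
tightest independent bounds) is a proper subset of the 1-split (big-M)
relaxation. -/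
theorem two_split_strictly_tighter_example :
    splitRelax (n := 4) (m := 2) (Fin 2)
        (Set.univ.pi fun _ => Set.Icc (0 : ℝ) 5)
        (fun i l t => if l = 0 then t else (![-1, -2, -1, -2] : Fin 4 → ℝ) i * t)
        ![3/2, -26]
        ![{0, 1}, {2, 3}]
        ![![0, 0], ![-15, -15]] ![![10, 10], ![0, 0]]
      ⊂
    splitRelax (n := 4) (m := 2) (Fin 1)
        (Set.univ.pi fun _ => Set.Icc (0 : ℝ) 5)
        (fun i l t => if l = 0 then t else (![-1, -2, -1, -2] : Fin 4 → ℝ) i * t)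
        ![3/2, -26]
        ![Finset.univ]
        ![![0], ![-30]] ![![20], ![0]] := by
  refine (Set.ssubset_iff_of_subset (splitRelax_subset_of_coarsening (fun _ => 0) ?_ ?_ ?_ ?_)).2
    ⟨![0, 2, 3, 5], ?_, fun hx => ?_⟩
  · intro s _ s' _ hss'
    fin_cases s <;> fin_cases s' <;> simp_all <;> decide
  · intro t
    fin_cases t
    decide
  · intro l t
    fin_cases l <;> fin_cases t <;> norm_num [Fin.sum_univ_two]
  · intro l t
    fin_cases l <;> fin_cases t <;> norm_num [Fin.sum_univ_two]
  · refine ⟨fun i _ => ?_, ![![43/4], ![-13]], ![![![3/4, 10]], ![![0, -13]]], ![1/2, 1/2],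
      fun l => ?_, ?_, fun l s => ?_, fun l => ?_, fun l s d => ?_, fun l s => ?_⟩
    · fin_cases i <;> norm_num
    · fin_cases l <;> norm_num
    · norm_num [Fin.sum_univ_two]
    · fin_cases l <;> fin_cases s <;> norm_num [Fin.sum_univ_two]
    · fin_cases l <;> norm_num
    · fin_cases l <;> fin_cases s <;> fin_cases d <;> norm_num
    · fin_cases l <;> fin_cases s <;> simp [Fin.sum_univ_four] <;> norm_num
  · obtain ⟨lam, hlam1, hbounds⟩ := exists_weights_of_mem_splitRelax hx
    have hsplit := (hbounds 1).1 0
    have htotal := (hbounds 0).2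
    simp [Fin.sum_univ_two] at hlam1 hsplit htotal
    linarith
end
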